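/- Let n, t ≥ 0 and p ≥ 1 be integers, let S ⊆ [n] with |S| = k, and let 𝐛 ∈ (ℤ/pℤ)^n satisfy ∅ ≠ supp(𝐛) ⊆ S. In the real inner product space of functions [n]^t × (ℤ/pℤ)^t → ℝ, define φ_{S,𝐛} as the 0/1 indicator vector of {(𝐢,𝐱) : 𝐢 ∈ S^t, ms(𝐢,𝐱) = 𝐛} and φ_𝐛 as the 0/1 indicator vector of {(𝐢,𝐱) : 𝐢 ∈ supp(𝐛)^t, ms(𝐢,𝐱) = 𝐛}. If φ_{S,𝐛} ≠ 0, then φ_𝐛 ≠ 0 and the squared normalized overlap satisfies ⟨φ_𝐛, φ_{S,𝐛}⟩² / (‖φ_𝐛‖² · ‖φ_{S,𝐛}‖²) ≥ p/(p + k^t); in particular, 1 − ⟨φ_𝐛, φ_{S,𝐛}⟩² / (‖φ_𝐛‖² · ‖φ_{S,𝐛}‖²) ≤ k^t/p. -/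

import Mathlib

open scoped RealInnerProductSpace

/-- The modular signature of a pair of sequences `i ∈ [n]^t`, `x ∈ (ℤ/pℤ)^t`:
its `q`-th coordinate is `∑_{r : i r = q} x r (mod p)`. -/
def ms {n t p : ℕ} (i : Fin t → Fin n) (x : Fin t → ZMod p) : Fin n → ZMod p :=
  fun q => ∑ r ∈ Finset.univ.filter (fun r => i r = q), x r

/-- The support of `b ∈ (ℤ/pℤ)^n`: the set of coordinates with nonzero entry. -/
def msupp {n p : ℕ} (b : Fin n → ZMod p) : Finset (Fin n) :=
  Finset.univ.filter (fun q => b q ≠ 0)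

/-- The (unnormalised) real vector `φ_{S,𝐛}`: the 0/1 indicator of
`{(𝐢,𝐱) : 𝐢 ∈ S^t, ms(𝐢,𝐱) = 𝐛}` in the Euclidean space indexed by
`[n]^t × (ℤ/pℤ)^t`. -/
noncomputable def phi (n t p : ℕ) [NeZero p] (S : Finset (Fin n)) (b : Fin n → ZMod p) :
    EuclideanSpace ℝ ((Fin t → Fin n) × (Fin t → ZMod p)) :=
  WithLp.toLp 2 (fun ix : (Fin t → Fin n) × (Fin t → ZMod p) =>
    if (∀ r, ix.1 r ∈ S) ∧ ms ix.1 ix.2 = b then 1 else 0)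

/-!
The overlap equals `A / B`, where `A` and `B` count the pairs `(𝐢, 𝐱)` with `ms 𝐢 𝐱 = 𝐛` and
`𝐢` ranging over `supp(𝐛)^t` and `S^t` respectively. For fixed `𝐢`, `𝐱 ↦ ms 𝐢 𝐱` is additive
with image the vectors supported on `range 𝐢`, so each of its nonempty fibres has
`p ^ (t - |range 𝐢|)` elements. An `𝐢 ∈ S^t \ supp(𝐛)^t` with nonempty fibre has range strictly
larger than `supp 𝐛`, so its fibre is at most `1/p` of the fibre of any `𝐢₀` with range exactly
`supp 𝐛`, which is counted in `A`. Hence `p * B ≤ (p + k^t) * A`.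
-/

open Finset

section ModularSignature

variable {n t p : ℕ}

lemma ms_add (i : Fin t → Fin n) (x y : Fin t → ZMod p) : ms i (x + y) = ms i x + ms i y := by
  funext q
  simp only [ms, Pi.add_apply, sum_add_distrib]

def msHom (i : Fin t → Fin n) : (Fin t → ZMod p) →+ (Fin n → ZMod p) :=
  AddMonoidHom.mk' (ms i) (ms_add i)

lemma ms_single (i : Fin t → Fin n) (r : Fin t) (c : ZMod p) :
    ms i (Pi.single r c) = Pi.single (i r) c := by
  funext q
  simp [ms, Pi.single_apply, eq_comm]

lemma msupp_subset_image_of_ms_eq {i : Fin t → Fin n} {x : Fin t → ZMod p}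
    {b : Fin n → ZMod p} (h : ms i x = b) : msupp b ⊆ univ.image i := by
  intro q hq
  by_contra hqi
  have hempty : univ.filter (fun r => i r = q) = ∅ :=
    filter_eq_empty_iff.2 fun r _ hr => hqi (hr ▸ mem_image_of_mem i (mem_univ r))
  simp [msupp, ← h, ms, hempty] at hq

lemma mem_range_ms_of_msupp_subset {i : Fin t → Fin n} {b : Fin n → ZMod p}
    (h : msupp b ⊆ univ.image i) : b ∈ Set.range (ms i) := by
  change b ∈ (msHom i).range
  rw [← univ_sum_single b]
  refine AddSubgroup.sum_mem _ fun q _ => ?_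
  by_cases hq : b q = 0
  · simp [hq]
  · obtain ⟨r, -, rfl⟩ := mem_image.1 (h (by simpa [msupp] using hq))
    exact ⟨Pi.single r (b (i r)), ms_single i r _⟩

variable [NeZero p]

lemma card_msupp_subset (R : Finset (Fin n)) :
    #{b : Fin n → ZMod p | msupp b ⊆ R} = p ^ #R := by
  have hpi : ({b : Fin n → ZMod p | msupp b ⊆ R} : Finset _) =
      Fintype.piFinset fun q => if q ∈ R then univ else {0} := by
    ext b
    simp only [mem_filter, mem_univ, true_and, Fintype.mem_piFinset, msupp, subset_iff]
    refine forall_congr' fun q => ?_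
    split_ifs <;> simp [*]
  simp [hpi, apply_ite card, prod_ite_mem]

lemma card_image_ms (i : Fin t → Fin n) :
    #(univ.image (ms (p := p) i)) = p ^ #(univ.image i) := by
  rw [← card_msupp_subset]
  congr 1
  ext b
  simp only [mem_image, mem_univ, true_and, mem_filter]
  exact ⟨fun ⟨x, hx⟩ => msupp_subset_image_of_ms_eq hx, mem_range_ms_of_msupp_subset⟩

lemma card_fiber_ms_mul {i : Fin t → Fin n} {b : Fin n → ZMod p}
    (h : msupp b ⊆ univ.image i) :
    #{x | ms i x = b} * p ^ #(univ.image i) = p ^ t := by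
  have hfib : ∀ c ∈ univ.image (ms i), #{x | ms i x = c} = #{x | ms i x = b} := fun c hc =>
    AddMonoidHom.card_fiber_eq_of_mem_range (msHom i) (by simpa [msHom] using hc)
      (mem_range_ms_of_msupp_subset h)
  rw [← card_image_ms, mul_comm, ← smul_eq_mul, ← sum_const, ← sum_congr rfl hfib,
    ← card_eq_sum_card_image, card_univ, Fintype.card_pi, prod_const, ZMod.card, card_univ,
    Fintype.card_fin]

end ModularSignature

section Overlap

variable {n t p : ℕ} [NeZero p]

variable (t) in
def msCount (S : Finset (Fin n)) (b : Fin n → ZMod p) : ℕ :=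
  ∑ i ∈ Fintype.piFinset fun _ : Fin t => S, #{x | ms i x = b}

lemma inner_phi_phi {T S : Finset (Fin n)} (b : Fin n → ZMod p) (hTS : T ⊆ S) :
    ⟪phi n t p T b, phi n t p S b⟫ = msCount t T b := by
  simp only [PiLp.inner_apply, phi, RCLike.inner_apply, conj_trivial,
    Fintype.sum_prod_type, msCount, Nat.cast_sum]
  rw [← sum_subset (subset_univ (Fintype.piFinset fun _ => T))]
  · refine sum_congr rfl fun i hi => ?_
    have hT : ∀ r, i r ∈ T := Fintype.mem_piFinset.1 hi
    simp +contextual [hT, fun r => hTS (hT r), ← sum_boole]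
  · intro i _ hi
    obtain ⟨r, hr⟩ : ∃ r, i r ∉ T := by simpa using hi
    have hT : ¬ ∀ r, i r ∈ T := fun h => hr (h r)
    simp [hT]

lemma norm_phi_sq (S : Finset (Fin n)) (b : Fin n → ZMod p) :
    ‖phi n t p S b‖ ^ 2 = msCount t S b := by
  rw [← real_inner_self_eq_norm_sq, inner_phi_phi b subset_rfl]

lemma phi_ne_zero_iff {S : Finset (Fin n)} {b : Fin n → ZMod p} :
    phi n t p S b ≠ 0 ↔ 0 < msCount t S b := by
  rw [← norm_ne_zero_iff, ← pow_ne_zero_iff two_ne_zero, norm_phi_sq, Nat.cast_ne_zero,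
    Nat.pos_iff_ne_zero]

lemma card_fiber_ms_pos {i : Fin t → Fin n} {b : Fin n → ZMod p}
    (h : msupp b ⊆ univ.image i) : 0 < #{x | ms i x = b} := by
  obtain ⟨x, hx⟩ := mem_range_ms_of_msupp_subset h
  exact card_pos.2 ⟨x, by simpa using hx⟩

lemma p_mul_card_fiber_ms_le {i j : Fin t → Fin n} {b : Fin n → ZMod p}
    (hi : msupp b ⊂ univ.image i) (hj : univ.image j = msupp b) :
    p * #{x | ms i x = b} ≤ #{x | ms j x = b} := by
  have hp : 0 < p := NeZero.pos p
  have hlt : #(msupp b) < #(univ.image i) := card_lt_card hi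
  refine Nat.le_of_mul_le_mul_right ?_ (pow_pos hp #(msupp b))
  calc p * #{x | ms i x = b} * p ^ #(msupp b) = #{x | ms i x = b} * p ^ (#(msupp b) + 1) := by
        ring
    _ ≤ #{x | ms i x = b} * p ^ #(univ.image i) := Nat.mul_le_mul_left _ (Nat.pow_le_pow_right hp hlt)
    _ = #{x | ms j x = b} * p ^ #(msupp b) := by
        rw [card_fiber_ms_mul hi.subset, ← card_fiber_ms_mul hj.ge, hj]

lemma exists_image_eq_msupp {S : Finset (Fin n)} {b : Fin n → ZMod p}
    (hb : (msupp b).Nonempty) (hpos : 0 < msCount t S b) :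
    ∃ j : Fin t → Fin n, univ.image j = msupp b := by
  obtain ⟨i, -, hi⟩ := exists_ne_zero_of_sum_ne_zero hpos.ne'
  obtain ⟨x, hx⟩ := card_ne_zero.1 hi
  have hsupp := msupp_subset_image_of_ms_eq (mem_filter.1 hx).2
  obtain ⟨q₀, hq₀⟩ := hb
  refine ⟨fun r => if i r ∈ msupp b then i r else q₀, ?_⟩
  ext q
  simp only [mem_image, mem_univ, true_and]
  constructor
  · rintro ⟨r, rfl⟩
    split_ifs with h <;> assumption
  · intro hq
    obtain ⟨r, -, rfl⟩ := mem_image.1 (hsupp hq)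
    exact ⟨r, if_pos hq⟩

lemma card_fiber_ms_le_msCount {j : Fin t → Fin n} {b : Fin n → ZMod p}
    (hj : univ.image j = msupp b) : #{x | ms j x = b} ≤ msCount t (msupp b) b :=
  single_le_sum (f := fun i => #{x | ms i x = b}) (fun _ _ => Nat.zero_le _)
    (Fintype.mem_piFinset.2 fun r => hj ▸ mem_image_of_mem j (mem_univ r))

lemma p_mul_msCount_le {S : Finset (Fin n)} {b : Fin n → ZMod p} (hbS : msupp b ⊆ S)
    {j : Fin t → Fin n} (hj : univ.image j = msupp b) :
    p * msCount t S b ≤ (p + #S ^ t) * msCount t (msupp b) b := by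
  set F : (Fin t → Fin n) → ℕ := fun i => #{x | ms i x = b}
  have hsub : (Fintype.piFinset fun _ : Fin t => msupp b) ⊆ Fintype.piFinset fun _ => S :=
    Fintype.piFinset_subset _ _ fun _ => hbS
  have htail : ∀ i ∈ (Fintype.piFinset fun _ => S) \ Fintype.piFinset fun _ => msupp b,
      p * F i ≤ F j := by
    intro i hi
    obtain h0 | hFi := (F i).eq_zero_or_pos
    · simp [h0]
    obtain ⟨x, hx⟩ := card_pos.1 hFi
    obtain ⟨r, hr⟩ : ∃ r, i r ∉ msupp b := by simpa using (mem_sdiff.1 hi).2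
    exact p_mul_card_fiber_ms_le ⟨msupp_subset_image_of_ms_eq (mem_filter.1 hx).2,
      fun h => hr (h (mem_image_of_mem i (mem_univ r)))⟩ hj
  calc p * msCount t S b
      = p * msCount t (msupp b) b +
          ∑ i ∈ (Fintype.piFinset fun _ => S) \ Fintype.piFinset fun _ => msupp b, p * F i := by
        rw [msCount, msCount, ← sum_sdiff hsub, mul_add, mul_sum, add_comm]
    _ ≤ p * msCount t (msupp b) b + #S ^ t * msCount t (msupp b) b := by
        grw [sum_le_sum htail, sum_const, smul_eq_mul]
        gcongr
        · exact (card_le_card sdiff_subset).trans (Fintype.card_piFinset_const _ _).le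
        · exact card_fiber_ms_le_msCount hj
    _ = (p + #S ^ t) * msCount t (msupp b) b := by ring

end Overlap

lemma div_bounds_of_mul_le_add_mul {a c p K : ℝ} (hp : 0 < p) (hK : 0 ≤ K) (hc : 0 < c)
    (h : p * c ≤ (p + K) * a) : p / (p + K) ≤ a / c ∧ 1 - a / c ≤ K / p := by
  have hpK : p / (p + K) ≤ a / c := by
    rw [div_le_div_iff₀ (by positivity) hc]
    linarith
  refine ⟨hpK, ?_⟩
  calc 1 - a / c ≤ 1 - p / (p + K) := by linarith
    _ = K / (p + K) := by field_simp; ring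
    _ ≤ K / p := div_le_div_of_nonneg_left hK hp (by linarith)

/-- If `φ_{S,𝐛} ≠ 0` then `φ_𝐛 ≠ 0`, the squared normalized overlap of `φ_𝐛`
(the indicator for `supp 𝐛`) with `φ_{S,𝐛}` is at least `p/(p + k^t)`, and
consequently `1 −` that overlap is at most `k^t/p`. -/
theorem overlap_phi_bound (n t p : ℕ) [NeZero p]
    (S : Finset (Fin n)) (k : ℕ) (hk : S.card = k)
    (b : Fin n → ZMod p) (hb : (msupp b).Nonempty) (hbS : msupp b ⊆ S)
    (hphi : phi n t p S b ≠ 0) :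
    phi n t p (msupp b) b ≠ 0 ∧
    (p : ℝ) / (p + (k : ℝ) ^ t) ≤
      ⟪phi n t p (msupp b) b, phi n t p S b⟫ ^ 2 /
        (‖phi n t p (msupp b) b‖ ^ 2 * ‖phi n t p S b‖ ^ 2) ∧
    1 - ⟪phi n t p (msupp b) b, phi n t p S b⟫ ^ 2 /
        (‖phi n t p (msupp b) b‖ ^ 2 * ‖phi n t p S b‖ ^ 2) ≤ (k : ℝ) ^ t / p := by
  subst hk
  have hS : 0 < msCount t S b := phi_ne_zero_iff.1 hphi
  obtain ⟨j, hj⟩ := exists_image_eq_msupp hb hS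
  have hsupp : 0 < msCount t (msupp b) b :=
    (card_fiber_ms_pos hj.ge).trans_le (card_fiber_ms_le_msCount hj)
  have hratio : ⟪phi n t p (msupp b) b, phi n t p S b⟫ ^ 2 /
      (‖phi n t p (msupp b) b‖ ^ 2 * ‖phi n t p S b‖ ^ 2) =
        (msCount t (msupp b) b : ℝ) / msCount t S b := by
    rw [inner_phi_phi b hbS, norm_phi_sq, norm_phi_sq, sq,
      mul_div_mul_left _ _ (by positivity)]
  rw [hratio]
  refine ⟨phi_ne_zero_iff.2 hsupp, div_bounds_of_mul_le_add_mul (Nat.cast_pos.2 (NeZero.pos p)) (by positivity)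
    (by positivity) ?_⟩
  exact_mod_cast p_mul_msCount_le hbS hj
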